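/- arXiv:2410.22941 — 3 statements merged into one kernel-verified Lean document; each statement's English description precedes it below -/
import Mathlib

section
/- Suppose for every x, P_{Y|X=x} satisfies the Poincaré inequality Var[f(Y)|X=x] ≤ (1/κ(x)) E[‖∇f(Y)‖² | X=x] for all f in a class 𝒜 containing y ↦ i(x,y), and suppose σ_min((J_y T(y))⁺) ≥ ρ(x) for all y. Then mmse(η(X)|Y) ≥ E[ρ²(X) κ(X) Var(i(X,Y) | X)]. -/
open MeasureTheory ProbabilityTheory

/-- Poincaré lower bound on the MMSE. Suppose for every `x` the conditional law
`ν x = P_{Y|X=x}` satisfies the Poincaré inequality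
`Var[f(Y)|X=x] ≤ (1/κ(x)) E[‖∇f(Y)‖² | X=x]` for all `f` in a class `𝒜` containing
`y ↦ i(x,y)` (whenever `κ(x) > 0`), and suppose `σ_min((J_y T(y))⁺) ≥ ρ(x)` for all `y`,
encoded via `ρ(x)‖v‖ ≤ ‖P_y v‖` where `P_y = (J_y T(y))⁺`. Assuming the identity
`mmse(η(X)|Y) = E[‖(J_Y T(Y))⁺ ∇_Y i(X,Y)‖²]`, we get
`mmse(η(X)|Y) ≥ E[ρ²(X) κ(X) Var(i(X,Y)|X)]`. -/
theorem poincare_lower_bound_mmse {𝒳 : Type*} [MeasurableSpace 𝒳] {k d : ℕ}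
    (PX : Measure 𝒳) [IsProbabilityMeasure PX]
    (ν : 𝒳 → Measure (EuclideanSpace ℝ (Fin k)))
    (hν : ∀ x, IsProbabilityMeasure (ν x))
    (𝒜 : Set (EuclideanSpace ℝ (Fin k) → ℝ))
    (i : 𝒳 → EuclideanSpace ℝ (Fin k) → ℝ)
    (P : EuclideanSpace ℝ (Fin k) →
      (EuclideanSpace ℝ (Fin k) →L[ℝ] EuclideanSpace ℝ (Fin d)))
    (κ ρ : 𝒳 → ℝ) (hκ : ∀ x, 0 ≤ κ x) (hρ : ∀ x, 0 ≤ ρ x)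
    (M : ℝ)
    -- the MMSE identity `mmse(η(X)|Y) = E[‖(J_Y T(Y))⁺ ∇_Y i(X,Y)‖²]`
    (hmmse : M = ∫ x, ∫ y, ‖P y (gradient (i x) y)‖ ^ 2 ∂ν x ∂PX)
    -- conditional Poincaré inequality for every `f ∈ 𝒜`
    (hPoin : ∀ x, ∀ f ∈ 𝒜, variance f (ν x) ≤ (1 / κ x) * ∫ y, ‖gradient f y‖ ^ 2 ∂ν x)
    -- the class `𝒜` contains the information density whenever `κ x > 0`
    (hiA : ∀ x, 0 < κ x → i x ∈ 𝒜)
    -- `σ_min((J_y T(y))⁺) ≥ ρ(x)` together with `‖Av‖ ≥ σ_min(A)‖v‖`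
    (hσ : ∀ x y (v : EuclideanSpace ℝ (Fin k)), ρ x * ‖v‖ ≤ ‖P y v‖)
    -- regularity
    (hint : Integrable (fun x => ∫ y, ‖P y (gradient (i x) y)‖ ^ 2 ∂ν x) PX)
    (hint2 : ∀ x, Integrable (fun y => ‖P y (gradient (i x) y)‖ ^ 2) (ν x)) :
    M ≥ ∫ x, ρ x ^ 2 * κ x * variance (i x) (ν x) ∂PX := by
  have key : ∀ x, ρ x ^ 2 * κ x * variance (i x) (ν x)
      ≤ ∫ y, ‖P y (gradient (i x) y)‖ ^ 2 ∂ν x := by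
    intro x
    rcases lt_or_eq_of_le (hκ x) with hpos | hzero
    · have h1 := hPoin x (i x) (hiA x hpos)
      have h2 : ρ x ^ 2 * ∫ y, ‖gradient (i x) y‖ ^ 2 ∂ν x
          ≤ ∫ y, ‖P y (gradient (i x) y)‖ ^ 2 ∂ν x := by
        rw [← integral_const_mul]
        refine integral_mono_of_nonneg ?_ (hint2 x) ?_
        · filter_upwards with y
          positivity
        · filter_upwards with y
          have := hσ x y (gradient (i x) y)
          have hnn : 0 ≤ ρ x * ‖gradient (i x) y‖ := mul_nonneg (hρ x) (norm_nonneg _)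
          calc ρ x ^ 2 * ‖gradient (i x) y‖ ^ 2
              = (ρ x * ‖gradient (i x) y‖) ^ 2 := by ring
            _ ≤ ‖P y (gradient (i x) y)‖ ^ 2 := by
                exact pow_le_pow_left₀ hnn this 2
      calc ρ x ^ 2 * κ x * variance (i x) (ν x)
          ≤ ρ x ^ 2 * κ x * ((1 / κ x) * ∫ y, ‖gradient (i x) y‖ ^ 2 ∂ν x) := by
            apply mul_le_mul_of_nonneg_left h1; positivity
        _ = ρ x ^ 2 * ∫ y, ‖gradient (i x) y‖ ^ 2 ∂ν x := by
            field_simp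
        _ ≤ _ := h2
    · have : ρ x ^ 2 * κ x * variance (i x) (ν x) = 0 := by rw [← hzero]; ring
      rw [this]
      exact integral_nonneg fun y => by positivity
  rw [hmmse, ge_iff_le]
  refine integral_mono_of_nonneg ?_ hint ?_
  · filter_upwards with x
    exact mul_nonneg (mul_nonneg (sq_nonneg _) (hκ x)) (variance_nonneg (i x) (ν x))
  · filter_upwards with x using key x
end

section
/- In the scalar blockage channel, for fixed x ≠ 0 and h ≠ 0, the shifted information density satisfies lim_{σ_s → 0} [ log√(2πσ_s²) + i(h; hx + σ_s z, x) ] = −z²/2 − log( α (2π x² σ_H²)^{−1/2} exp(−h²/(2σ_H²)) ) for every z ∈ ℝ. -/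
open Real Filter

/-- Information density of the scalar blockage channel:
`i(h; y, x) = log (f_{Y|H,X}(y|h,x) / f_{Y|X}(y|x))` where
`f_{Y|H,X}(y|h,x) = (2πσ_s²)^{-1/2} exp(-(y-hx)²/(2σ_s²))` and
`f_{Y|X}(y|x) = (1-α)(2πσ_s²)^{-1/2} exp(-y²/(2σ_s²))
  + α(2π(x²σ_H²+σ_s²))^{-1/2} exp(-y²/(2(x²σ_H²+σ_s²)))`. -/
noncomputable def infoDen (α σH2 σs x h y : ℝ) : ℝ :=
  Real.log ((Real.exp (-(y - h * x) ^ 2 / (2 * σs ^ 2)) / Real.sqrt (2 * π * σs ^ 2)) /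
    ((1 - α) * Real.exp (-y ^ 2 / (2 * σs ^ 2)) / Real.sqrt (2 * π * σs ^ 2)
      + α * Real.exp (-y ^ 2 / (2 * (x ^ 2 * σH2 + σs ^ 2))) /
        Real.sqrt (2 * π * (x ^ 2 * σH2 + σs ^ 2))))

/-- In the scalar blockage channel, for fixed `x ≠ 0` and `h ≠ 0`, the shifted information
density satisfies
`lim_{σ_s → 0⁺} [log √(2πσ_s²) + i(h; hx + σ_s z, x)]
  = -z²/2 - log (α (2π x² σ_H²)^{-1/2} exp (-h²/(2σ_H²)))` for every `z ∈ ℝ`. -/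
theorem infoDen_shifted_limit_highSNR (α σH2 x h : ℝ) (hα : α ∈ Set.Ioo (0:ℝ) 1)
    (hσH2 : 0 < σH2) (hx : x ≠ 0) (hh : h ≠ 0) (z : ℝ) :
    Tendsto (fun σs : ℝ =>
        Real.log (Real.sqrt (2 * π * σs ^ 2)) + infoDen α σH2 σs x h (h * x + σs * z))
      (nhdsWithin 0 (Set.Ioi 0))
      (nhds (-z ^ 2 / 2 -
        Real.log (α * (Real.sqrt (2 * π * (x ^ 2 * σH2)))⁻¹ *
          Real.exp (-h ^ 2 / (2 * σH2))))) := by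
  obtain ⟨hα0, hα1⟩ := hα
  have hα1' : (0:ℝ) < 1 - α := by linarith
  have hhx : h * x ≠ 0 := mul_ne_zero hh hx
  have hx2 : 0 < x ^ 2 * σH2 := by positivity
  have hπ : 0 < π := Real.pi_pos
  set c : ℝ := (h * x) ^ 2 / 4 with hcdef
  have hc : 0 < c := by positivity
  set L : ℝ := α * Real.exp (-(h * x) ^ 2 / (2 * (x ^ 2 * σH2))) /
      Real.sqrt (2 * π * (x ^ 2 * σH2)) with hLdef
  have hL0 : 0 < L := by
    have : 0 < Real.sqrt (2 * π * (x ^ 2 * σH2)) := Real.sqrt_pos.mpr (by positivity)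
    positivity
  -- second term tends to L
  have hT2 : Tendsto (fun σs : ℝ =>
      α * Real.exp (-(h * x + σs * z) ^ 2 / (2 * (x ^ 2 * σH2 + σs ^ 2))) /
        Real.sqrt (2 * π * (x ^ 2 * σH2 + σs ^ 2))) (nhdsWithin 0 (Set.Ioi 0)) (nhds L) := by
    have hcont : ContinuousAt (fun σs : ℝ =>
        α * Real.exp (-(h * x + σs * z) ^ 2 / (2 * (x ^ 2 * σH2 + σs ^ 2))) /
          Real.sqrt (2 * π * (x ^ 2 * σH2 + σs ^ 2))) 0 := by
      apply ContinuousAt.div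
      · apply ContinuousAt.mul continuousAt_const
        apply Real.continuous_exp.continuousAt.comp
        apply ContinuousAt.div (by fun_prop) (by fun_prop)
        show (2 * (x ^ 2 * σH2 + (0:ℝ) ^ 2)) ≠ 0
        positivity
      · fun_prop
      · have : 0 < Real.sqrt (2 * π * (x ^ 2 * σH2 + (0:ℝ) ^ 2)) :=
          Real.sqrt_pos.mpr (by norm_num; positivity)
        exact this.ne'
    have := hcont.tendsto.mono_left
      (nhdsWithin_le_nhds : nhdsWithin (0:ℝ) (Set.Ioi 0) ≤ nhds 0)
    convert this using 2
    rw [hLdef]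
    norm_num
  -- exp bound
  have hexp : ∀ a : ℝ, 0 < a → Real.exp (-a) ≤ a⁻¹ := by
    intro a ha
    rw [Real.exp_neg]
    exact inv_anti₀ ha (by linarith [Real.add_one_le_exp a])
  -- first term tends to 0
  have hT1 : Tendsto (fun σs : ℝ =>
      (1 - α) * Real.exp (-(h * x + σs * z) ^ 2 / (2 * σs ^ 2)) /
        Real.sqrt (2 * π * σs ^ 2)) (nhdsWithin 0 (Set.Ioi 0)) (nhds 0) := by
    set δ : ℝ := |h * x| / (2 * (|z| + 1)) with hδdef
    have hδ : 0 < δ := by positivity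
    set k : ℝ := 2 * (1 - α) / (c * Real.sqrt (2 * π)) with hkdef
    have hsqrt2π : 0 < Real.sqrt (2 * π) := Real.sqrt_pos.mpr (by positivity)
    apply squeeze_zero' (g := fun σs => k * σs)
    · filter_upwards [self_mem_nhdsWithin] with σs hσs
      exact div_nonneg (mul_nonneg hα1'.le (Real.exp_nonneg _)) (Real.sqrt_nonneg _)
    · have hmem : Set.Ioo (0:ℝ) δ ∈ nhdsWithin (0:ℝ) (Set.Ioi 0) :=
        Ioo_mem_nhdsGT_of_mem ⟨le_refl 0, hδ⟩
      filter_upwards [hmem] with σs hσ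
      obtain ⟨h1, h2⟩ := hσ
      have hS : Real.sqrt (2 * π * σs ^ 2) = Real.sqrt (2 * π) * σs := by
        rw [Real.sqrt_mul (by positivity), Real.sqrt_sq h1.le]
      have habs : |σs * z| ≤ |h * x| / 2 := by
        rw [abs_mul, abs_of_pos h1]
        calc σs * |z| ≤ σs * (|z| + 1) := by nlinarith [abs_nonneg z]
          _ ≤ δ * (|z| + 1) := by nlinarith [abs_nonneg z]
          _ = |h * x| / 2 := by rw [hδdef]; field_simp
      have hsq : c ≤ (h * x + σs * z) ^ 2 := by
        have h3 : |h * x| / 2 ≤ |h * x + σs * z| := by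
          have := abs_sub_abs_le_abs_sub (h * x) (-(σs * z))
          simp only [sub_neg_eq_add, abs_neg] at this
          linarith
        calc c = (|h * x| / 2) ^ 2 := by rw [hcdef, div_pow, sq_abs]; norm_num
          _ ≤ |h * x + σs * z| ^ 2 := by
              apply pow_le_pow_left₀ (by positivity) h3
          _ = (h * x + σs * z) ^ 2 := sq_abs _
      have hE : Real.exp (-(h * x + σs * z) ^ 2 / (2 * σs ^ 2)) ≤ 2 * σs ^ 2 / c := by
        calc Real.exp (-(h * x + σs * z) ^ 2 / (2 * σs ^ 2))
            ≤ Real.exp (-(c / (2 * σs ^ 2))) := by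
              apply Real.exp_le_exp.mpr
              rw [neg_div, neg_le_neg_iff]
              apply div_le_div_of_nonneg_right hsq (by positivity)
          _ ≤ (c / (2 * σs ^ 2))⁻¹ := hexp _ (by positivity)
          _ = 2 * σs ^ 2 / c := by field_simp
      rw [hS, div_le_iff₀ (by positivity)]
      calc (1 - α) * Real.exp (-(h * x + σs * z) ^ 2 / (2 * σs ^ 2))
          ≤ (1 - α) * (2 * σs ^ 2 / c) := by
            apply mul_le_mul_of_nonneg_left hE hα1'.le
        _ = k * σs * (Real.sqrt (2 * π) * σs) := by
            rw [hkdef]; field_simp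
    · have : Tendsto (fun σs : ℝ => k * σs) (nhds 0) (nhds (k * 0)) :=
        (continuous_const.mul continuous_id).tendsto 0
      rw [mul_zero] at this
      exact this.mono_left nhdsWithin_le_nhds
  have hTD : Tendsto (fun σs : ℝ =>
      (1 - α) * Real.exp (-(h * x + σs * z) ^ 2 / (2 * σs ^ 2)) / Real.sqrt (2 * π * σs ^ 2)
        + α * Real.exp (-(h * x + σs * z) ^ 2 / (2 * (x ^ 2 * σH2 + σs ^ 2))) /
          Real.sqrt (2 * π * (x ^ 2 * σH2 + σs ^ 2))) (nhdsWithin 0 (Set.Ioi 0)) (nhds L) := by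
    have := hT1.add hT2
    rwa [zero_add] at this
  -- pointwise identity on Ioi 0
  have hkey : ∀ σs : ℝ, 0 < σs →
      Real.log (Real.sqrt (2 * π * σs ^ 2)) + infoDen α σH2 σs x h (h * x + σs * z)
        = -z ^ 2 / 2 - Real.log
          ((1 - α) * Real.exp (-(h * x + σs * z) ^ 2 / (2 * σs ^ 2)) / Real.sqrt (2 * π * σs ^ 2)
            + α * Real.exp (-(h * x + σs * z) ^ 2 / (2 * (x ^ 2 * σH2 + σs ^ 2))) /
              Real.sqrt (2 * π * (x ^ 2 * σH2 + σs ^ 2))) := by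
    intro σs hσs
    have hSpos : 0 < Real.sqrt (2 * π * σs ^ 2) := Real.sqrt_pos.mpr (by positivity)
    have hS2pos : 0 < Real.sqrt (2 * π * (x ^ 2 * σH2 + σs ^ 2)) :=
      Real.sqrt_pos.mpr (by positivity)
    have hD1 : 0 ≤ (1 - α) * Real.exp (-(h * x + σs * z) ^ 2 / (2 * σs ^ 2)) /
        Real.sqrt (2 * π * σs ^ 2) := by positivity
    have hD2 : 0 < α * Real.exp (-(h * x + σs * z) ^ 2 / (2 * (x ^ 2 * σH2 + σs ^ 2))) /
        Real.sqrt (2 * π * (x ^ 2 * σH2 + σs ^ 2)) := by positivity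
    have hDpos : 0 < (1 - α) * Real.exp (-(h * x + σs * z) ^ 2 / (2 * σs ^ 2)) /
        Real.sqrt (2 * π * σs ^ 2)
          + α * Real.exp (-(h * x + σs * z) ^ 2 / (2 * (x ^ 2 * σH2 + σs ^ 2))) /
            Real.sqrt (2 * π * (x ^ 2 * σH2 + σs ^ 2)) := by linarith
    have hnum : -(h * x + σs * z - h * x) ^ 2 / (2 * σs ^ 2) = -z ^ 2 / 2 := by
      field_simp
      ring
    rw [infoDen, hnum, Real.log_div (by positivity) hDpos.ne',
      Real.log_div (Real.exp_ne_zero _) hSpos.ne', Real.log_exp]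
    ring
  have heq : (fun σs : ℝ =>
      Real.log (Real.sqrt (2 * π * σs ^ 2)) + infoDen α σH2 σs x h (h * x + σs * z))
      =ᶠ[nhdsWithin 0 (Set.Ioi 0)] (fun σs : ℝ => -z ^ 2 / 2 - Real.log
          ((1 - α) * Real.exp (-(h * x + σs * z) ^ 2 / (2 * σs ^ 2)) / Real.sqrt (2 * π * σs ^ 2)
            + α * Real.exp (-(h * x + σs * z) ^ 2 / (2 * (x ^ 2 * σH2 + σs ^ 2))) /
              Real.sqrt (2 * π * (x ^ 2 * σH2 + σs ^ 2)))) := by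
    filter_upwards [self_mem_nhdsWithin] with σs hσs using hkey σs hσs
  have hLeq : α * (Real.sqrt (2 * π * (x ^ 2 * σH2)))⁻¹ * Real.exp (-h ^ 2 / (2 * σH2)) = L := by
    rw [hLdef]
    have harg : -(h * x) ^ 2 / (2 * (x ^ 2 * σH2)) = -h ^ 2 / (2 * σH2) := by
      field_simp
    rw [harg]
    ring
  rw [tendsto_congr' heq, hLeq]
  exact tendsto_const_nhds.sub ((Real.continuousAt_log hL0.ne').tendsto.comp hTD)
end

section
/- In the scalar blockage channel, for fixed x ≠ 0 and h = 0, the information density evaluated at y = σ_s z satisfies lim_{σ_s → 0} i(0; σ_s z, x) = −log(1−α) for every z ∈ ℝ. -/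
open Real Filter

/-!
With `y = σ_s z` and `h = 0` the unblocked Gaussian factor `exp (-z²/2) / √(2πσ_s²)` appears in
numerator and denominator, so after multiplying through by `√(2πσ_s²)` the information density
is `-log ((1 - α) + α · exp (-z²/2)⁻¹ · f(σ_s z) · √(2πσ_s²))`, where `f` is the density of the
blocked branch, of variance `x²σ_H² + σ_s² → x²σ_H² > 0`. The last factor vanishes as
`σ_s → 0`, leaving `-log (1 - α)`.
-/

lemma log_div_div_add_eq_neg_log (a b c : ℝ) {S : ℝ} (hS : S ≠ 0) :
    log ((a / S) / (b / S + c)) = -log ((b + c * S) / a) := by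
  rw [div_add' _ _ _ hS, div_div_div_cancel_right₀ hS, ← log_inv, inv_div]

lemma infoDen_zero_mul (α σH2 x z : ℝ) {σs : ℝ} (hσs : σs ≠ 0) :
    infoDen α σH2 σs x 0 (σs * z) =
      -log (((1 - α) * exp (-z ^ 2 / 2) + α * exp (-(σs * z) ^ 2 / (2 * (x ^ 2 * σH2 + σs ^ 2)))
        / sqrt (2 * π * (x ^ 2 * σH2 + σs ^ 2)) * sqrt (2 * π * σs ^ 2)) / exp (-z ^ 2 / 2)) := by
  have hS : sqrt (2 * π * σs ^ 2) ≠ 0 := by positivity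
  have hexp : -(σs * z) ^ 2 / (2 * σs ^ 2) = -z ^ 2 / 2 := by field_simp
  rw [infoDen, zero_mul, sub_zero, hexp, log_div_div_add_eq_neg_log _ _ _ hS]

lemma tendsto_gaussianDensity_mul_sqrt_nhds_zero {v : ℝ} (hv : 0 < v) (z : ℝ) :
    Tendsto (fun σ : ℝ => exp (-(σ * z) ^ 2 / (2 * (v + σ ^ 2))) / sqrt (2 * π * (v + σ ^ 2))
      * sqrt (2 * π * σ ^ 2)) (nhds 0) (nhds 0) := by
  have hcont : Continuous (fun σ : ℝ => exp (-(σ * z) ^ 2 / (2 * (v + σ ^ 2)))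
      / sqrt (2 * π * (v + σ ^ 2)) * sqrt (2 * π * σ ^ 2)) := by
    fun_prop (disch := intro; positivity)
  simpa using hcont.tendsto 0

/-- In the scalar blockage channel, for fixed `x ≠ 0` and `h = 0`, the information density
evaluated at `y = σ_s z` satisfies `lim_{σ_s → 0⁺} i(0; σ_s z, x) = -log (1-α)` for every
`z ∈ ℝ`. -/
theorem infoDen_limit_highSNR_h_zero (α σH2 x : ℝ) (hα : α ∈ Set.Ioo (0:ℝ) 1)
    (hσH2 : 0 < σH2) (hx : x ≠ 0) (z : ℝ) :
    Tendsto (fun σs : ℝ => infoDen α σH2 σs x 0 (σs * z))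
      (nhdsWithin 0 (Set.Ioi 0)) (nhds (-Real.log (1 - α))) := by
  have hE : exp (-z ^ 2 / 2) ≠ 0 := (exp_pos _).ne'
  have hv : 0 < x ^ 2 * σH2 := by positivity
  have hratio := (((tendsto_gaussianDensity_mul_sqrt_nhds_zero hv z).const_mul α).const_add
    ((1 - α) * exp (-z ^ 2 / 2))).div_const (exp (-z ^ 2 / 2))
  rw [mul_zero, add_zero, mul_div_cancel_right₀ _ hE] at hratio
  simp only [← mul_div_assoc, ← mul_assoc] at hratio
  refine ((hratio.mono_left nhdsWithin_le_nhds).log (by linarith [hα.2])).neg.congr' ?_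
  filter_upwards [self_mem_nhdsWithin] with σs hσs
  exact (infoDen_zero_mul α σH2 x z (ne_of_gt hσs)).symm
end
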